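/- For finite information structures u and v, player 1 weakly prefers u to v in every finite zero-sum game (i.e., val(u,g) ≥ val(v,g) for all payoff functions g bounded by 1) if and only if there exist garblings q₁, q₂ such that q₁.u = v.q₂. -/

import Mathlib

open scoped BigOperators

noncomputable section

/-- A probability distribution on a finite type, given as a nonnegative function summing to 1. -/
def IsDist {α : Type*} [Fintype α] (u : α → ℝ) : Prop :=
  (∀ a, 0 ≤ u a) ∧ ∑ a, u a = 1

/-- A garbling (stochastic map / behavioral strategy). -/
def IsKernel {α β : Type*} [Fintype β] (q : α → β → ℝ) : Prop :=
  ∀ a, IsDist (q a)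

/-- Expected payoff in the zero-sum Bayesian game `Γ(u,g)` when players use
behavioral strategies `σ` and `τ`. -/
def pay {K C D I J : Type*} [Fintype K] [Fintype C] [Fintype D] [Fintype I] [Fintype J]
    (u : K × C × D → ℝ) (g : K → I → J → ℝ) (σ : C → I → ℝ) (τ : D → J → ℝ) : ℝ :=
  ∑ k, ∑ c, ∑ d, ∑ i, ∑ j, u (k, c, d) * σ c i * τ d j * g k i j

/-- The value (maxmin) of the zero-sum Bayesian game `Γ(u,g)`, player 1 maximizing. -/
def gameVal {K C D I J : Type*} [Fintype K] [Fintype C] [Fintype D] [Fintype I] [Fintype J]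
    (u : K × C × D → ℝ) (g : K → I → J → ℝ) : ℝ :=
  sSup {x : ℝ | ∃ σ : C → I → ℝ, IsKernel σ ∧
    x = sInf {y : ℝ | ∃ τ : D → J → ℝ, IsKernel τ ∧ y = pay u g σ τ}}

/-- Garbling of player 1's signal: `(q.u)(k,c,d) = ∑ c', u(k,c',d) q(c|c')`. -/
def garbleL {K C C' D : Type*} [Fintype C] (q : C → C' → ℝ) (u : K × C × D → ℝ) :
    K × C' × D → ℝ :=
  fun x => ∑ c, u (x.1, c, x.2.2) * q c x.2.1

/-- Garbling of player 2's signal: `(u.q)(k,c,d) = ∑ d', u(k,c,d') q(d|d')`. -/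
def garbleR {K C D D' : Type*} [Fintype D] (q : D → D' → ℝ) (u : K × C × D → ℝ) :
    K × C × D' → ℝ :=
  fun x => ∑ d, u (x.1, x.2.1, d) * q d x.2.2

/-- ℓ¹ distance. -/
def l1 {α : Type*} [Fintype α] (u v : α → ℝ) : ℝ := ∑ a, |u a - v a|

/-- Payoff functions bounded by 1. -/
def Bounded1 {K I J : Type*} (g : K → I → J → ℝ) : Prop := ∀ k i j, |g k i j| ≤ 1

/-- The value-based distance: sup over all finite zero-sum games (with nonempty
finite action sets, payoffs bounded by 1) of the absolute difference of values. -/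
def valueDist {K C D C' D' : Type*} [Fintype K] [Fintype C] [Fintype D] [Fintype C'] [Fintype D']
    (u : K × C × D → ℝ) (v : K × C' × D' → ℝ) : ℝ :=
  sSup {x : ℝ | ∃ (m n : ℕ) (g : K → Fin (m + 1) → Fin (n + 1) → ℝ),
    Bounded1 g ∧ x = |gameVal u g - gameVal v g|}

/-- Value of a single-agent decision problem on a single-agent information structure. -/
def val1 {K C I : Type*} [Fintype K] [Fintype C] [Fintype I] [Nonempty I]
    (u : K × C → ℝ) (g : K → I → ℝ) : ℝ :=
  ∑ c, ⨆ i, ∑ k, u (k, c) * g k i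

/-- The single-agent value-based distance. -/
def valueDist1 {K C C' : Type*} [Fintype K] [Fintype C] [Fintype C']
    (u : K × C → ℝ) (v : K × C' → ℝ) : ℝ :=
  sSup {x : ℝ | ∃ (m : ℕ) (g : K → Fin (m + 1) → ℝ),
    (∀ k i, |g k i| ≤ 1) ∧ x = |val1 u g - val1 v g|}

/-- Garbling of the signal in a single-agent structure. -/
def garble1 {K C C' : Type*} [Fintype C] (q : C → C' → ℝ) (u : K × C → ℝ) : K × C' → ℝ :=
  fun x => ∑ c, u (x.1, c) * q c x.2

end

/-!
Player 1 can simulate a garbling of his own signal, so garbling it can only lower the value;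
likewise player 2 can simulate a garbling of hers, so garbling it can only raise the value.
Conversely, if `q₁.u = v.q₂` has no solution, the compact convex sets `{q₁.u}` and `{v.q₂}`
are disjoint and some weights `h` on `K × C × D` strictly separate them. In the game where
both players announce a signal and player 1 receives `h(k, c, d)` (rescaled to be bounded by 1),
a truthful player 2 keeps player 1 below the separating level under `u`, while a truthful
player 1 guarantees himself more than that under `v`.
-/

open Finset

section Kernels

variable {α β γ : Type*} [Fintype β] [Fintype γ]

lemma isDist_pi_single [DecidableEq β] (b : β) : IsDist (Pi.single b (1 : ℝ)) :=
  ⟨fun b' => by by_cases h : b' = b <;> simp [h], by simp⟩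

lemma isKernel_id [DecidableEq β] : IsKernel (fun b : β => Pi.single b (1 : ℝ)) :=
  fun b => isDist_pi_single b

lemma exists_isKernel [Nonempty β] : ∃ q : α → β → ℝ, IsKernel q := by
  classical
  obtain ⟨b⟩ := ‹Nonempty β›
  exact ⟨fun _ => Pi.single b 1, fun _ => isDist_pi_single b⟩

def kernelComp (p : α → β → ℝ) (q : β → γ → ℝ) : α → γ → ℝ :=
  fun a c => ∑ b, p a b * q b c

lemma IsKernel.comp {p : α → β → ℝ} {q : β → γ → ℝ} (hp : IsKernel p) (hq : IsKernel q) :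
    IsKernel (kernelComp p q) := by
  refine fun a => ⟨fun c => sum_nonneg fun b _ => mul_nonneg ((hp a).1 b) ((hq b).1 c), ?_⟩
  simp only [kernelComp]
  rw [sum_comm]
  simp [← mul_sum, (hq _).2, (hp a).2]

lemma convex_setOf_isKernel : Convex ℝ {q : α → β → ℝ | IsKernel q} := by
  intro p hp q hq s t hs ht hst a
  refine ⟨fun b => ?_, ?_⟩
  · simp only [Pi.add_apply, Pi.smul_apply, smul_eq_mul]
    exact add_nonneg (mul_nonneg hs ((hp a).1 b)) (mul_nonneg ht ((hq a).1 b))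
  · simp [sum_add_distrib, ← mul_sum, (hp a).2, (hq a).2, hst]

lemma isCompact_setOf_isKernel [Fintype α] : IsCompact {q : α → β → ℝ | IsKernel q} := by
  have hclosed : IsClosed {q : α → β → ℝ | IsKernel q} := by
    simp only [IsKernel, IsDist, Set.ofPred_forall, Set.ofPred_and]
    refine isClosed_iInter fun a => (isClosed_iInter fun b => ?_).inter ?_
    · exact isClosed_le continuous_const (by fun_prop)
    · exact isClosed_eq (by fun_prop) continuous_const
  refine (isCompact_univ_pi fun _ => isCompact_univ_pi fun _ => isCompact_Icc).of_isClosed_subset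
    hclosed fun q hq => Set.mem_univ_pi.2 fun a => Set.mem_univ_pi.2 fun b =>
      ⟨(hq a).1 b, (hq a).2 ▸ single_le_sum (fun b' _ => (hq a).1 b') (mem_univ b)⟩

end Kernels

section Garbling

variable {K C C' C'' D D' D'' : Type*}

lemma garbleL_id [Fintype C] [DecidableEq C] (u : K × C × D → ℝ) :
    garbleL (fun c => Pi.single c 1) u = u := by
  funext ⟨k, c, d⟩
  simp [garbleL, Pi.single_apply]

lemma garbleR_id [Fintype D] [DecidableEq D] (u : K × C × D → ℝ) :
    garbleR (fun d => Pi.single d 1) u = u := by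
  funext ⟨k, c, d⟩
  simp [garbleR, Pi.single_apply]

lemma garbleL_garbleL [Fintype C] [Fintype C'] (q : C → C' → ℝ) (p : C' → C'' → ℝ)
    (u : K × C × D → ℝ) : garbleL p (garbleL q u) = garbleL (kernelComp q p) u := by
  funext ⟨k, c'', d⟩
  simp only [garbleL, kernelComp, sum_mul, mul_sum, mul_assoc]
  exact sum_comm

lemma garbleR_garbleR [Fintype D] [Fintype D'] (q : D → D' → ℝ) (p : D' → D'' → ℝ)
    (u : K × C × D → ℝ) : garbleR p (garbleR q u) = garbleR (kernelComp q p) u := by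
  funext ⟨k, c, d''⟩
  simp only [garbleR, kernelComp, sum_mul, mul_sum, mul_assoc]
  exact sum_comm

lemma garbleL_garbleR_comm [Fintype C] [Fintype D] (p : C → C' → ℝ) (q : D → D' → ℝ)
    (u : K × C × D → ℝ) : garbleL p (garbleR q u) = garbleR q (garbleL p u) := by
  funext ⟨k, c', d'⟩
  simp only [garbleL, garbleR, sum_mul, mul_right_comm _ (q _ _)]
  exact sum_comm

end Garbling

section Relabel

variable {C I I' : Type*}

def relabel (e : I ≃ I') (σ : C → I → ℝ) : C → I' → ℝ :=
  fun c i' => σ c (e.symm i')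

lemma isKernel_relabel [Fintype I] [Fintype I'] (e : I ≃ I') {σ : C → I → ℝ} (hσ : IsKernel σ) :
    IsKernel (relabel e σ) :=
  fun c => ⟨fun _ => (hσ c).1 _, (e.symm.sum_comp (σ c)).trans (hσ c).2⟩

lemma exists_isKernel_relabel_iff [Fintype I] [Fintype I'] (e : I ≃ I')
    {P : (C → I' → ℝ) → Prop} :
    (∃ σ, IsKernel σ ∧ P (relabel e σ)) ↔ ∃ σ', IsKernel σ' ∧ P σ' := by
  refine ⟨fun ⟨σ, hσ, hP⟩ => ⟨_, isKernel_relabel e hσ, hP⟩, fun ⟨σ', hσ', hP⟩ => ?_⟩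
  have hinv : relabel e (relabel e.symm σ') = σ' := by
    funext c i'
    simp [relabel]
  exact ⟨relabel e.symm σ', isKernel_relabel e.symm hσ', hinv.symm ▸ hP⟩

end Relabel

section Payoff

variable {K C C' D D' I J : Type*} [Fintype K] [Fintype C] [Fintype C'] [Fintype D] [Fintype D']
  [Fintype I] [Fintype J]

lemma pay_eq_sum_garble (u : K × C × D → ℝ) (g : K → I → J → ℝ) (σ : C → I → ℝ)
    (τ : D → J → ℝ) :
    pay u g σ τ = ∑ x, garbleR τ (garbleL σ u) x * g x.1 x.2.1 x.2.2 := by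
  simp only [pay, garbleL, garbleR, Fintype.sum_prod_type, sum_mul]
  refine sum_congr rfl fun k _ => ?_
  rw [sum_comm]
  calc ∑ d, ∑ c, ∑ i, ∑ j, u (k, c, d) * σ c i * τ d j * g k i j
      = ∑ d, ∑ i, ∑ j, ∑ c, u (k, c, d) * σ c i * τ d j * g k i j := by
        refine sum_congr rfl fun d _ => ?_
        rw [sum_comm]
        exact sum_congr rfl fun i _ => sum_comm
    _ = _ := by
        rw [sum_comm]
        exact sum_congr rfl fun i _ => sum_comm

lemma pay_garbleL (q : C → C' → ℝ) (u : K × C × D → ℝ) (g : K → I → J → ℝ)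
    (σ : C' → I → ℝ) (τ : D → J → ℝ) :
    pay (garbleL q u) g σ τ = pay u g (kernelComp q σ) τ := by
  rw [pay_eq_sum_garble, pay_eq_sum_garble, garbleL_garbleL]

lemma pay_garbleR (q : D → D' → ℝ) (v : K × C × D → ℝ) (g : K → I → J → ℝ)
    (σ : C → I → ℝ) (τ : D' → J → ℝ) :
    pay (garbleR q v) g σ τ = pay v g σ (kernelComp q τ) := by
  rw [pay_eq_sum_garble, pay_eq_sum_garble, garbleL_garbleR_comm, garbleR_garbleR]

lemma pay_id_right [DecidableEq D] (u : K × C × D → ℝ) (h : K × C' × D → ℝ)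
    (σ : C → C' → ℝ) :
    pay u (fun k c d => h (k, c, d)) σ (fun d => Pi.single d 1) = ∑ x, garbleL σ u x * h x := by
  rw [pay_eq_sum_garble, garbleR_id]

lemma pay_id_left [DecidableEq C'] (v : K × C' × D' → ℝ) (h : K × C' × D → ℝ)
    (τ : D' → D → ℝ) :
    pay v (fun k c d => h (k, c, d)) (fun c => Pi.single c 1) τ = ∑ x, garbleR τ v x * h x := by
  rw [pay_eq_sum_garble, garbleL_id]

lemma pay_relabel {I' J' : Type*} [Fintype I'] [Fintype J'] (u : K × C × D → ℝ)
    (g : K → I' → J' → ℝ) (e : I ≃ I') (e' : J ≃ J') (σ : C → I → ℝ) (τ : D → J → ℝ) :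
    pay u (fun k i j => g k (e i) (e' j)) σ τ = pay u g (relabel e σ) (relabel e' τ) := by
  simp only [pay, relabel, ← e.sum_comp, ← e'.sum_comp, Equiv.symm_apply_apply]

lemma exists_abs_pay_le (u : K × C × D → ℝ) (g : K → I → J → ℝ) :
    ∃ B, ∀ σ τ, IsKernel σ → IsKernel τ → |pay u g σ τ| ≤ B := by
  have hcont : Continuous fun p : (C → I → ℝ) × (D → J → ℝ) => pay u g p.1 p.2 := by
    unfold pay
    fun_prop
  obtain ⟨B, hB⟩ := (isCompact_setOf_isKernel.prod
    isCompact_setOf_isKernel).exists_bound_of_continuousOn hcont.continuousOn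
  exact ⟨B, fun σ τ hσ hτ => hB (σ, τ) ⟨hσ, hτ⟩⟩

end Payoff

section GameValue

variable {K C C' D D' I J : Type*} [Fintype K] [Fintype C] [Fintype C'] [Fintype D] [Fintype D']
  [Fintype I] [Fintype J]

noncomputable def securityLevel (u : K × C × D → ℝ) (g : K → I → J → ℝ) (σ : C → I → ℝ) : ℝ :=
  sInf {y : ℝ | ∃ τ : D → J → ℝ, IsKernel τ ∧ y = pay u g σ τ}

lemma gameVal_eq_sSup_securityLevel (u : K × C × D → ℝ) (g : K → I → J → ℝ) :
    gameVal u g = sSup {x : ℝ | ∃ σ : C → I → ℝ, IsKernel σ ∧ x = securityLevel u g σ} :=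
  rfl

lemma gameVal_relabel {I' J' : Type*} [Fintype I'] [Fintype J'] (u : K × C × D → ℝ)
    (g : K → I' → J' → ℝ) (e : I ≃ I') (e' : J ≃ J') :
    gameVal u (fun k i j => g k (e i) (e' j)) = gameVal u g := by
  have hlevel (σ : C → I → ℝ) :
      securityLevel u (fun k i j => g k (e i) (e' j)) σ = securityLevel u g (relabel e σ) := by
    simp only [securityLevel, pay_relabel]
    congr 1
    exact Set.ext fun y => exists_isKernel_relabel_iff e' (P := fun τ => y = _)
  simp only [gameVal_eq_sSup_securityLevel, hlevel]
  congr 1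
  exact Set.ext fun x => exists_isKernel_relabel_iff e (P := fun σ => x = _)

variable {u : K × C × D → ℝ} {g : K → I → J → ℝ} {σ : C → I → ℝ} {τ : D → J → ℝ} {x : ℝ}

lemma securityLevel_le_pay (hσ : IsKernel σ) (hτ : IsKernel τ) :
    securityLevel u g σ ≤ pay u g σ τ := by
  obtain ⟨B, hB⟩ := exists_abs_pay_le u g
  refine csInf_le ⟨-B, ?_⟩ ⟨τ, hτ, rfl⟩
  rintro _ ⟨τ', hτ', rfl⟩
  exact neg_le_of_abs_le (hB σ τ' hσ hτ')

lemma le_securityLevel [Nonempty J] (h : ∀ τ, IsKernel τ → x ≤ pay u g σ τ) :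
    x ≤ securityLevel u g σ := by
  obtain ⟨τ, hτ⟩ := exists_isKernel (α := D) (β := J)
  refine le_csInf ⟨_, τ, hτ, rfl⟩ ?_
  rintro _ ⟨τ', hτ', rfl⟩
  exact h τ' hτ'

lemma securityLevel_le_gameVal [Nonempty J] (hσ : IsKernel σ) :
    securityLevel u g σ ≤ gameVal u g := by
  obtain ⟨B, hB⟩ := exists_abs_pay_le u g
  obtain ⟨τ, hτ⟩ := exists_isKernel (α := D) (β := J)
  refine le_csSup ⟨B, ?_⟩ ⟨σ, hσ, rfl⟩
  rintro _ ⟨σ', hσ', rfl⟩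
  exact (securityLevel_le_pay hσ' hτ).trans (le_of_abs_le (hB σ' τ hσ' hτ))

lemma gameVal_le [Nonempty I] (h : ∀ σ, IsKernel σ → securityLevel u g σ ≤ x) :
    gameVal u g ≤ x := by
  obtain ⟨σ, hσ⟩ := exists_isKernel (α := C) (β := I)
  refine csSup_le ⟨_, σ, hσ, rfl⟩ ?_
  rintro _ ⟨σ', hσ', rfl⟩
  exact h σ' hσ'

lemma gameVal_garbleL_le [Nonempty I] [Nonempty J] {q : C → C' → ℝ} (hq : IsKernel q) :
    gameVal (garbleL q u) g ≤ gameVal u g := by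
  refine gameVal_le fun σ hσ => ?_
  have : securityLevel (garbleL q u) g σ = securityLevel u g (kernelComp q σ) := by
    simp only [securityLevel, pay_garbleL]
  exact this ▸ securityLevel_le_gameVal (hq.comp hσ)

lemma gameVal_le_garbleR [Nonempty I] [Nonempty J] {q : D → D' → ℝ} (hq : IsKernel q) :
    gameVal u g ≤ gameVal (garbleR q u) g := by
  refine gameVal_le fun σ hσ => le_trans ?_ (securityLevel_le_gameVal hσ)
  refine le_securityLevel fun τ hτ => ?_
  rw [pay_garbleR]
  exact securityLevel_le_pay hσ (hq.comp hτ)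

end GameValue

section Separation

variable {K C C' D D' : Type*} [Fintype K] [Fintype C] [Fintype C'] [Fintype D] [Fintype D']

def garbleLₗ (u : K × C × D → ℝ) : (C → C' → ℝ) →ₗ[ℝ] (K × C' × D → ℝ) where
  toFun q := garbleL q u
  map_add' p q := by
    funext x
    simp [garbleL, mul_add, sum_add_distrib]
  map_smul' a q := by
    funext x
    simp [garbleL, mul_sum, mul_left_comm]

def garbleRₗ (v : K × C × D → ℝ) : (D → D' → ℝ) →ₗ[ℝ] (K × C × D' → ℝ) where
  toFun q := garbleR q v
  map_add' p q := by
    funext x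
    simp [garbleR, mul_add, sum_add_distrib]
  map_smul' a q := by
    funext x
    simp [garbleR, mul_sum, mul_left_comm]

lemma exists_separating_weights (u : K × C × D → ℝ) (v : K × C' × D' → ℝ)
    (hng : ¬∃ (q₁ : C → C' → ℝ) (q₂ : D' → D → ℝ), IsKernel q₁ ∧ IsKernel q₂ ∧
      garbleL q₁ u = garbleR q₂ v) :
    ∃ (h : K × C' × D → ℝ) (s t : ℝ), s < t ∧
      (∀ q₁, IsKernel q₁ → ∑ x, garbleL q₁ u x * h x < s) ∧
      ∀ q₂, IsKernel q₂ → t < ∑ x, garbleR q₂ v x * h x := by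
  classical
  set A := garbleLₗ u '' {q : C → C' → ℝ | IsKernel q}
  set B := garbleRₗ v '' {q : D' → D → ℝ | IsKernel q}
  have hdisj : Disjoint A B := Set.disjoint_left.2 fun _ ⟨q₁, hq₁, h₁⟩ ⟨q₂, hq₂, h₂⟩ =>
    hng ⟨q₁, q₂, hq₁, hq₂, h₁.trans h₂.symm⟩
  obtain ⟨f, s, t, hA, hst, hB⟩ := geometric_hahn_banach_compact_closed
    (convex_setOf_isKernel.linear_image _)
    (isCompact_setOf_isKernel.image (garbleLₗ u).continuous_of_finiteDimensional)
    (convex_setOf_isKernel.linear_image _)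
    (isCompact_setOf_isKernel.image (garbleRₗ v).continuous_of_finiteDimensional).isClosed hdisj
  have hf (w : K × C' × D → ℝ) : f w = ∑ x, w x * f (fun y => if x = y then 1 else 0) := by
    simpa using LinearMap.pi_apply_eq_sum_univ f.toLinearMap w
  refine ⟨fun x => f (fun y => if x = y then 1 else 0), s, t, hst, fun q₁ hq₁ => ?_,
    fun q₂ hq₂ => ?_⟩
  · exact hf _ ▸ hA _ ⟨q₁, hq₁, rfl⟩
  · exact hf _ ▸ hB _ ⟨q₂, hq₂, rfl⟩

end Separation

lemma exists_gameVal_lt_of_not_garbling {K C C' D D' : Type*} [Fintype K] [Fintype C]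
    [Fintype C'] [Fintype D] [Fintype D'] [Nonempty C'] [Nonempty D]
    (u : K × C × D → ℝ) (v : K × C' × D' → ℝ)
    (hng : ¬∃ (q₁ : C → C' → ℝ) (q₂ : D' → D → ℝ), IsKernel q₁ ∧ IsKernel q₂ ∧
      garbleL q₁ u = garbleR q₂ v) :
    ∃ g : K → C' → D → ℝ, Bounded1 g ∧ gameVal u g < gameVal v g := by
  classical
  obtain ⟨h, s, t, hst, hu, hv⟩ := exists_separating_weights u v hng
  have hM : 0 < ‖h‖ + 1 := by positivity
  set w : K × C' × D → ℝ := fun x => h x / (‖h‖ + 1)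
  have hw (p : K × C' × D → ℝ) : ∑ x, p x * w x = (∑ x, p x * h x) / (‖h‖ + 1) := by
    simp only [w, sum_div, mul_div_assoc]
  refine ⟨fun k c d => w (k, c, d), fun k c d => ?_, ?_⟩
  · rw [abs_div, abs_of_pos hM, div_le_one hM]
    exact (norm_le_pi_norm h _).trans (le_add_of_nonneg_right zero_le_one)
  have hu_le : gameVal u (fun k c d => w (k, c, d)) ≤ s / (‖h‖ + 1) := by
    refine gameVal_le fun σ hσ => (securityLevel_le_pay hσ isKernel_id).trans ?_
    rw [pay_id_right, hw]
    exact (div_lt_div_of_pos_right (hu σ hσ) hM).le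
  have hv_ge : t / (‖h‖ + 1) ≤ gameVal v (fun k c d => w (k, c, d)) := by
    refine le_trans (le_securityLevel fun τ hτ => ?_) (securityLevel_le_gameVal isKernel_id)
    rw [pay_id_left, hw]
    exact (div_lt_div_of_pos_right (hv τ hτ) hM).le
  exact hu_le.trans_lt ((div_lt_div_of_pos_right hst hM).trans_le hv_ge)

lemma exists_equiv_fin_succ (α : Type*) [Fintype α] [Nonempty α] :
    ∃ m : ℕ, Nonempty (Fin (m + 1) ≃ α) :=
  ⟨Fintype.card α - 1,
    ⟨(Fintype.equivFinOfCardEq (Nat.sub_add_cancel Fintype.card_pos).symm).symm⟩⟩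

theorem stmt2_general {K C D : Type*} [Fintype K] [Fintype C] [Fintype D]
    (u v : K × C × D → ℝ) :
    (∀ (m n : ℕ) (g : K → Fin (m + 1) → Fin (n + 1) → ℝ), Bounded1 g →
        gameVal v g ≤ gameVal u g) ↔
      ∃ (q₁ : C → C → ℝ) (q₂ : D → D → ℝ), IsKernel q₁ ∧ IsKernel q₂ ∧
        garbleL q₁ u = garbleR q₂ v := by
  classical
  constructor
  · intro hval
    by_contra hng
    obtain ⟨_, c, d⟩ : Nonempty (K × C × D) := by
      by_contra hempty
      have : IsEmpty (K × C × D) := not_nonempty_iff.1 hempty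
      exact hng ⟨_, _, isKernel_id, isKernel_id, Subsingleton.elim _ _⟩
    have : Nonempty C := ⟨c⟩
    have : Nonempty D := ⟨d⟩
    obtain ⟨m, ⟨e⟩⟩ := exists_equiv_fin_succ C
    obtain ⟨n, ⟨e'⟩⟩ := exists_equiv_fin_succ D
    obtain ⟨g, hg, hlt⟩ := exists_gameVal_lt_of_not_garbling u v hng
    have hle := hval m n (fun k i j => g k (e i) (e' j)) fun k i j => hg k (e i) (e' j)
    rw [gameVal_relabel, gameVal_relabel] at hle
    exact hle.not_gt hlt
  · rintro ⟨q₁, q₂, hq₁, hq₂, hgarble⟩ m n g -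
    calc gameVal v g ≤ gameVal (garbleR q₂ v) g := gameVal_le_garbleR hq₂
      _ = gameVal (garbleL q₁ u) g := by rw [hgarble]
      _ ≤ gameVal u g := gameVal_garbleL_le hq₁

theorem stmt2 {K C D : Type*} [Fintype K] [Fintype C] [Fintype D]
    (u v : K × C × D → ℝ) (hu : IsDist u) (hv : IsDist v) :
    (∀ (m n : ℕ) (g : K → Fin (m + 1) → Fin (n + 1) → ℝ), Bounded1 g →
        gameVal v g ≤ gameVal u g) ↔
      ∃ (q₁ : C → C → ℝ) (q₂ : D → D → ℝ), IsKernel q₁ ∧ IsKernel q₂ ∧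
        garbleL q₁ u = garbleR q₂ v :=
  stmt2_general u v
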